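/- With the acoustic geometry setup below, the inverse foliation density satisfies the transport equation Lμ = c^{−1}(Lc)·μ − c·(Tc) on U. -/

import Mathlib

/-! Writing `μ = c² / ∂ₜu`, the Leibniz rule gives `Lμ = 2c(Lc)/∂ₜu − c² L(∂ₜu)/(∂ₜu)²`.
Differentiating the eikonal equation in `t` and using `∂ᵢ∂ₜu = ∂ₜ∂ᵢu` gives
`L(∂ₜu) = c⁻¹(∂ₜc)∂ₜu`, hence `Lμ = c⁻¹μ(2Lc − ∂ₜc)`. Since `T = c⁻²μ(∂ₜ − L)`, the term
`−c(Tc)` equals `c⁻¹μ(Lc − ∂ₜc)`, and the two sides agree. -/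

noncomputable section

open scoped BigOperators

/-- Points of ℝ⁴ with coordinates (x⁰,x¹,x²,x³) = (t,x¹,x²,x³). -/
abbrev Pt : Type := Fin 4 → ℝ

/-- Partial derivative ∂_α f. -/
def pd (f : Pt → ℝ) (α : Fin 4) (x : Pt) : ℝ :=
  fderiv ℝ f x (Pi.single α 1)

/-- The acoustic metric g = diag(−c², 1, 1, 1). -/
def gMat (c : Pt → ℝ) (α β : Fin 4) (x : Pt) : ℝ :=
  if α = β then (if α = 0 then -(c x) ^ 2 else 1) else 0

/-- The inverse metric g⁻¹ = diag(−c⁻², 1, 1, 1). -/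
def gInv (c : Pt → ℝ) (α β : Fin 4) (x : Pt) : ℝ :=
  if α = β then (if α = 0 then -((c x) ^ 2)⁻¹ else 1) else 0

/-- Vf = V^α ∂_α f. -/
def vApp (V : Pt → Fin 4 → ℝ) (f : Pt → ℝ) (x : Pt) : ℝ :=
  ∑ α, V x α * pd f α x

/-- g(V, W) = g_{αβ} V^α W^β. -/
def gPair (c : Pt → ℝ) (V W : Pt → Fin 4 → ℝ) (x : Pt) : ℝ :=
  ∑ α, ∑ β, gMat c α β x * V x α * W x β

/-- L̂^α = −g^{αβ}∂_β u. -/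
def Lhat (c u : Pt → ℝ) (x : Pt) (α : Fin 4) : ℝ :=
  -∑ β, gInv c α β x * pd u β x

/-- The inverse foliation density μ = 1/(c⁻²∂_t u). -/
def invDens (c u : Pt → ℝ) (x : Pt) : ℝ :=
  (((c x) ^ 2)⁻¹ * pd u 0 x)⁻¹

/-- L = μ L̂  (so L⁰ = 1). -/
def Lvec (c u : Pt → ℝ) (x : Pt) (α : Fin 4) : ℝ :=
  invDens c u x * Lhat c u x α

/-- T̂ = c⁻¹(∂_t − L). -/
def That (c u : Pt → ℝ) (x : Pt) (α : Fin 4) : ℝ :=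
  (c x)⁻¹ * ((if α = 0 then 1 else 0) - Lvec c u x α)

/-- T = c⁻¹ μ T̂. -/
def Tvec (c u : Pt → ℝ) (x : Pt) (α : Fin 4) : ℝ :=
  (c x)⁻¹ * invDens c u x * That c u x α

/-- L̄ = c⁻²μ L + 2T. -/
def Lbar (c u : Pt → ℝ) (x : Pt) (α : Fin 4) : ℝ :=
  ((c x) ^ 2)⁻¹ * invDens c u x * Lvec c u x α + 2 * Tvec c u x α

/-- The induced inverse metric ĝ^{αβ} = g^{αβ} + (2μ)⁻¹(L^αL̄^β + L̄^αL^β). -/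
def ghat (c u : Pt → ℝ) (α β : Fin 4) (x : Pt) : ℝ :=
  gInv c α β x + (2 * invDens c u x)⁻¹ *
    (Lvec c u x α * Lbar c u x β + Lbar c u x α * Lvec c u x β)

section PartialDerivatives

variable {f g : Pt → ℝ} {x : Pt}

lemma pd_sub (hf : DifferentiableAt ℝ f x) (hg : DifferentiableAt ℝ g x) (α : Fin 4) :
    pd (fun y => f y - g y) α x = pd f α x - pd g α x := by
  simp [pd, fderiv_fun_sub hf hg]

lemma pd_mul (hf : DifferentiableAt ℝ f x) (hg : DifferentiableAt ℝ g x) (α : Fin 4) :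
    pd (fun y => f y * g y) α x = f x * pd g α x + g x * pd f α x := by
  simp [pd, fderiv_fun_mul hf hg]

lemma pd_pow (hf : DifferentiableAt ℝ f x) (n : ℕ) (α : Fin 4) :
    pd (fun y => f y ^ n) α x = n * f x ^ (n - 1) * pd f α x := by
  simp [pd, fderiv_fun_pow n hf]

lemma pd_inv (hf : DifferentiableAt ℝ f x) (hx : f x ≠ 0) (α : Fin 4) :
    pd (fun y => (f y)⁻¹) α x = -pd f α x / f x ^ 2 := by
  rw [pd, show (fun y => (f y)⁻¹) = (fun z : ℝ => z⁻¹) ∘ f from rfl,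
    fderiv_comp x (differentiableAt_inv hx) hf, fderiv_inv]
  simp [pd, div_eq_mul_inv]

lemma pd_sum {ι : Type*} (s : Finset ι) {F : ι → Pt → ℝ}
    (hF : ∀ i ∈ s, DifferentiableAt ℝ (F i) x) (α : Fin 4) :
    pd (fun y => ∑ i ∈ s, F i y) α x = ∑ i ∈ s, pd (F i) α x := by
  simp [pd, fderiv_fun_sum hF]

lemma pd_eq_zero_of_eventuallyEq_zero (hf : f =ᶠ[nhds x] 0) (α : Fin 4) : pd f α x = 0 := by
  simp [pd, hf.fderiv_eq]

lemma differentiableAt_pd (hf : ContDiffAt ℝ 2 f x) (β : Fin 4) :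
    DifferentiableAt ℝ (pd f β) x :=
  ((hf.fderiv_right (m := 1) le_rfl).differentiableAt one_ne_zero).clm_apply
    (differentiableAt_const _)

lemma pd_pd_comm (hf : ContDiffAt ℝ 2 f x) (α β : Fin 4) :
    pd (pd f α) β x = pd (pd f β) α x := by
  have hd : DifferentiableAt ℝ (fderiv ℝ f) x :=
    (hf.fderiv_right (m := 1) le_rfl).differentiableAt one_ne_zero
  have hsymm : IsSymmSndFDerivAt ℝ f x := hf.isSymmSndFDerivAt (by simp)
  have hpd (γ : Fin 4) : pd f γ = fun y => fderiv ℝ f y (Pi.single γ 1) := rfl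
  simp only [pd, hpd, fderiv_clm_apply hd (differentiableAt_const _)]
  simpa using hsymm (Pi.single β 1) (Pi.single α 1)

end PartialDerivatives

section Derivations

variable {V : Pt → Fin 4 → ℝ} {f g : Pt → ℝ} {x : Pt}

lemma vApp_mul (hf : DifferentiableAt ℝ f x) (hg : DifferentiableAt ℝ g x) :
    vApp V (fun y => f y * g y) x = f x * vApp V g x + g x * vApp V f x := by
  simp only [vApp, pd_mul hf hg, Finset.mul_sum, ← Finset.sum_add_distrib]
  exact Finset.sum_congr rfl fun α _ => by ring

lemma vApp_pow (hf : DifferentiableAt ℝ f x) (n : ℕ) :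
    vApp V (fun y => f y ^ n) x = n * f x ^ (n - 1) * vApp V f x := by
  simp only [vApp, pd_pow hf, Finset.mul_sum]
  exact Finset.sum_congr rfl fun α _ => by ring

lemma vApp_inv (hf : DifferentiableAt ℝ f x) (hx : f x ≠ 0) :
    vApp V (fun y => (f y)⁻¹) x = -vApp V f x / f x ^ 2 := by
  simp only [vApp, pd_inv hf hx, neg_div, Finset.sum_div, ← Finset.sum_neg_distrib]
  exact Finset.sum_congr rfl fun α _ => by ring

end Derivations

lemma gInv_quadratic_form (c : Pt → ℝ) (x : Pt) (a : Fin 4 → ℝ) :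
    ∑ α, ∑ β, gInv c α β x * a α * a β
      = ∑ i : Fin 3, a i.succ ^ 2 - ((c x) ^ 2)⁻¹ * a 0 ^ 2 := by
  simp only [gInv, Fin.sum_univ_four, Fin.sum_univ_three, Fin.succ_zero_eq_one, Fin.succ_one_eq_two,
    Fin.reduceSucc, Fin.reduceEq, reduceIte]
  ring

section AcousticGeometry

variable {c u : Pt → ℝ} {x : Pt}

lemma Lvec_zero (hc0 : c x ≠ 0) (hut : pd u 0 x ≠ 0) : Lvec c u x 0 = 1 := by
  simp only [Lvec, Lhat, invDens, gInv, Fin.sum_univ_four, Fin.reduceEq, reduceIte, zero_mul,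
    add_zero]
  field_simp

lemma Lvec_succ (i : Fin 3) : Lvec c u x i.succ = -invDens c u x * pd u i.succ x := by
  simp [Lvec, Lhat, gInv]

lemma vApp_Lvec (hc0 : c x ≠ 0) (hut : pd u 0 x ≠ 0) (f : Pt → ℝ) :
    vApp (Lvec c u) f x
      = pd f 0 x - invDens c u x * ∑ i : Fin 3, pd u i.succ x * pd f i.succ x := by
  simp only [vApp, Fin.sum_univ_succ (n := 3), Lvec_zero hc0 hut, Lvec_succ,
    Fin.sum_univ_three]
  ring

lemma vApp_Tvec (f : Pt → ℝ) :
    vApp (Tvec c u) f x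
      = ((c x) ^ 2)⁻¹ * invDens c u x * (pd f 0 x - vApp (Lvec c u) f x) := by
  simp only [vApp, Tvec, That, Fin.sum_univ_four, Fin.reduceEq, reduceIte]
  ring

lemma invDens_eq_sq_mul_inv : invDens c u = fun y => c y ^ 2 * (pd u 0 y)⁻¹ := by
  funext y
  rw [invDens, mul_inv, inv_inv, mul_comm]

variable (hc : DifferentiableAt ℝ c x) (hc0 : c x ≠ 0) (hu : ContDiffAt ℝ 2 u x)
  (heik : ∀ᶠ y in nhds x, ∑ α, ∑ β, gInv c α β y * pd u α y * pd u β y = 0)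
include hc hc0 hu heik

lemma pd_eikonal (α : Fin 4) :
    ∑ i : Fin 3, pd u i.succ x * pd (pd u i.succ) α x
      = ((c x) ^ 2)⁻¹ * pd u 0 x * pd (pd u 0) α x - pd c α x / c x ^ 3 * pd u 0 x ^ 2 := by
  have hu' := differentiableAt_pd hu
  have hq : (fun y => ∑ i : Fin 3, pd u i.succ y ^ 2 - ((c y) ^ 2)⁻¹ * pd u 0 y ^ 2)
      =ᶠ[nhds x] 0 := heik.mono fun y hy => (gInv_quadratic_form c y _).symm.trans hy
  have h := pd_eq_zero_of_eventuallyEq_zero hq α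
  rw [pd_sub (by fun_prop) (by fun_prop (disch := simp [hc0])), pd_sum _ (by fun_prop),
    pd_mul (by fun_prop (disch := simp [hc0])) (by fun_prop), pd_inv (by fun_prop) (by simp [hc0])]
    at h
  simp only [pd_pow hc, pd_pow (hu' _), Nat.cast_ofNat, Nat.add_one_sub_one, pow_one, mul_assoc,
    ← Finset.mul_sum] at h
  field_simp at h ⊢
  linear_combination h / 2

lemma vApp_Lvec_pd_zero (hut : pd u 0 x ≠ 0) :
    vApp (Lvec c u) (pd u 0) x = pd c 0 x / c x * pd u 0 x := by
  have hsymm (i : Fin 3) : pd (pd u 0) i.succ x = pd (pd u i.succ) 0 x := pd_pd_comm hu _ _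
  rw [vApp_Lvec hc0 hut]
  simp only [hsymm]
  rw [pd_eikonal hc hc0 hu heik, invDens]
  field_simp
  ring

lemma vApp_Lvec_invDens (hut : pd u 0 x ≠ 0) :
    vApp (Lvec c u) (invDens c u) x
      = invDens c u x * (2 * vApp (Lvec c u) c x - pd c 0 x) / c x := by
  have hut' := differentiableAt_pd hu 0
  rw [invDens_eq_sq_mul_inv, vApp_mul (hc.fun_pow 2) (hut'.fun_inv hut), vApp_inv hut' hut,
    vApp_pow hc, vApp_Lvec_pd_zero hc hc0 hu heik hut]
  field_simp
  ring

end AcousticGeometry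

/-- Equation (2.38) of Lemma 2.10: the transport equation Lμ = c⁻¹(Lc)μ − c(Tc). -/
theorem transport_equation_of_mu
    (U : Set Pt) (hU : IsOpen U) (c u : Pt → ℝ)
    (hc : ContDiffOn ℝ (⊤ : ℕ∞) c U) (hcpos : ∀ x ∈ U, 0 < c x)
    (hu : ContDiffOn ℝ (⊤ : ℕ∞) u U)
    (heik : ∀ x ∈ U, ∑ α, ∑ β, gInv c α β x * pd u α x * pd u β x = 0)
    (hut : ∀ x ∈ U, 0 < pd u 0 x) :
    ∀ x ∈ U,
      vApp (Lvec c u) (invDens c u) x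
        = (c x)⁻¹ * vApp (Lvec c u) c x * invDens c u x
          - c x * vApp (Tvec c u) c x := by
  intro x hx
  have hxU : U ∈ nhds x := hU.mem_nhds hx
  have hc0 : c x ≠ 0 := (hcpos x hx).ne'
  have hcd : DifferentiableAt ℝ c x := (hc.contDiffAt hxU).differentiableAt (by simp)
  have hu2 : ContDiffAt ℝ 2 u x := (hu.contDiffAt hxU).of_le (WithTop.coe_le_coe.mpr le_top)
  rw [vApp_Lvec_invDens hcd hc0 hu2 (Filter.eventually_of_mem hxU heik) (hut x hx).ne', vApp_Tvec]
  field_simp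
  ring
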